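/- arXiv:2503.10862 — 6 statements merged into one kernel-verified Lean document; each statement's English description precedes it below -/
import Mathlib

section
/- The vertices of the polytope ASM_n are exactly the n×n alternating sign matrices. -/
/-!
Every ASM lies in `ASM_n`, and conversely the extreme points of a convex hull lie in the
generating set, so it remains to see that each ASM `A` is extreme. The partial row sums
`W_{ij}` form an injective linear map, which sends `ASM_n` into the unit cube `[0,1]^{n×n}`
(the cube is convex and contains the image of every ASM), and sends `A` to a `{0,1}`-matrix,
i.e. a vertex of the cube. An injective linear map reflects extreme points, so `A` is a vertex.
-/

open scoped BigOperators
open scoped Classical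

namespace ASMPaper

variable {n : ℕ}

/-- Partial row sum `W_{ij} = ∑_{j' ≤ j} a_{i j'}`. -/
def rowPartial (A : Matrix (Fin n) (Fin n) ℝ) (i j : Fin n) : ℝ :=
  ∑ j' ∈ Finset.univ.filter (fun j' : Fin n => j' ≤ j), A i j'

/-- Partial column sum `N_{ij} = ∑_{i' ≤ i} a_{i' j}`. -/
def colPartial (A : Matrix (Fin n) (Fin n) ℝ) (i j : Fin n) : ℝ :=
  ∑ i' ∈ Finset.univ.filter (fun i' : Fin n => i' ≤ i), A i' j

/-- An alternating sign matrix: entries in {0,1,-1}, rows and columns sum to 1,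
nonzero entries alternating in sign along rows and columns (equivalently, all
partial row and column sums lie in {0,1}). -/
def IsASM (A : Matrix (Fin n) (Fin n) ℝ) : Prop :=
  (∀ i j, A i j = 0 ∨ A i j = 1 ∨ A i j = -1) ∧
  (∀ i j, rowPartial A i j = 0 ∨ rowPartial A i j = 1) ∧
  (∀ i j, colPartial A i j = 0 ∨ colPartial A i j = 1) ∧
  (∀ i, ∑ j, A i j = 1) ∧
  (∀ j, ∑ i, A i j = 1)

/-- The ASM polytope: convex hull of the `n × n` alternating sign matrices. -/
def ASMPolytope (n : ℕ) : Set (Matrix (Fin n) (Fin n) ℝ) :=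
  convexHull ℝ {A : Matrix (Fin n) (Fin n) ℝ | IsASM A}

/-- A face of a convex set: a convex extreme subset. -/
def IsFaceOf (F P : Set (Matrix (Fin n) (Fin n) ℝ)) : Prop :=
  IsExtreme ℝ P F ∧ Convex ℝ F

/-- A facet: a nonempty face of dimension one less. -/
def IsFacetOf (G F : Set (Matrix (Fin n) (Fin n) ℝ)) : Prop :=
  IsFaceOf G F ∧ G.Nonempty ∧
    Module.finrank ℝ (vectorSpan ℝ G) + 1 = Module.finrank ℝ (vectorSpan ℝ F)

/-- The ASMs (vertices) belonging to a face `F`. -/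
def faceASMs (F : Set (Matrix (Fin n) (Fin n) ℝ)) : Set (Matrix (Fin n) (Fin n) ℝ) :=
  {A | A ∈ F ∧ IsASM A}

/-- `A` and `B` are estranged in `F` if no proper face of `F` contains both. -/
def Estranged (F : Set (Matrix (Fin n) (Fin n) ℝ)) (A B : Matrix (Fin n) (Fin n) ℝ) : Prop :=
  ∀ F', IsFaceOf F' F → F' ≠ F → ¬(A ∈ F' ∧ B ∈ F')

/-- The doubly directed graph of a set `X` of ASMs: grid vertices `(i,j)`, with an
(undirected) edge between orthogonally adjacent grid vertices whenever the
corresponding grid edge receives both orientations among the simple flow grids of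
members of `X` (the orientation of a grid edge in the simple flow grid of `A` is
determined by the relevant partial sum of `A`). -/
def ddGraph (X : Set (Matrix (Fin n) (Fin n) ℝ)) : SimpleGraph (Fin n × Fin n) where
  Adj v w :=
    (v.1 = w.1 ∧ ((v.2 : ℕ) + 1 = (w.2 : ℕ) ∨ (w.2 : ℕ) + 1 = (v.2 : ℕ)) ∧
      ∃ A ∈ X, ∃ B ∈ X, rowPartial A v.1 (min v.2 w.2) ≠ rowPartial B v.1 (min v.2 w.2)) ∨
    (v.2 = w.2 ∧ ((v.1 : ℕ) + 1 = (w.1 : ℕ) ∨ (w.1 : ℕ) + 1 = (v.1 : ℕ)) ∧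
      ∃ A ∈ X, ∃ B ∈ X, colPartial A (min v.1 w.1) v.2 ≠ colPartial B (min v.1 w.1) v.2)
  symm := by
    constructor
    rintro v w (⟨h1, h2, h3⟩ | ⟨h1, h2, h3⟩)
    · exact Or.inl ⟨h1.symm, h2.symm, by rw [min_comm, ← h1]; exact h3⟩
    · exact Or.inr ⟨h1.symm, h2.symm, by rw [min_comm, ← h1]; exact h3⟩
  loopless := by
    constructor
    rintro v (⟨-, h2, -⟩ | ⟨-, h2, -⟩) <;> rcases h2 with h | h <;> omega

/-- Degree of a grid vertex in the doubly directed graph. -/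
noncomputable def ddDegree (X : Set (Matrix (Fin n) (Fin n) ℝ)) (v : Fin n × Fin n) : ℕ :=
  ((ddGraph X).neighborSet v).ncard

/-- The (non-isolated) vertices of the doubly directed graph. -/
def ddSupport (X : Set (Matrix (Fin n) (Fin n) ℝ)) : Set (Fin n × Fin n) :=
  {v | ∃ w, (ddGraph X).Adj v w}

/-- The doubly directed graph is connected (on its support). -/
def DDConnected (X : Set (Matrix (Fin n) (Fin n) ℝ)) : Prop :=
  ∀ v ∈ ddSupport X, ∀ w ∈ ddSupport X, (ddGraph X).Reachable v w

theorem eq_of_sum_Iic_eq {ι M : Type*} [LinearOrder ι] [LocallyFiniteOrderBot ι] [WellFoundedLT ι]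
    [AddCancelCommMonoid M] {f g : ι → M}
    (h : ∀ j, ∑ i ∈ Finset.Iic j, f i = ∑ i ∈ Finset.Iic j, g i) : f = g := by
  funext j
  induction j using WellFoundedLT.induction with
  | _ j ih =>
    have hIio : ∑ i ∈ Finset.Iio j, f i = ∑ i ∈ Finset.Iio j, g i :=
      Finset.sum_congr rfl fun i hi => ih i (Finset.mem_Iio.mp hi)
    have hj := h j
    rw [Finset.Iic_eq_cons_Iio, Finset.sum_cons, Finset.sum_cons, hIio] at hj
    exact add_right_cancel hj

theorem mem_extremePoints_of_injective_of_mapsTo {𝕜 E F : Type*}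
    [Ring 𝕜] [PartialOrder 𝕜] [IsOrderedRing 𝕜] [AddCommGroup E] [Module 𝕜 E]
    [AddCommGroup F] [Module 𝕜 F] {f : E →ₗ[𝕜] F}
    (hf : Function.Injective f) {s : Set E} {t : Set F} (hst : Set.MapsTo f s t) {x : E}
    (hx : x ∈ s) (hfx : f x ∈ Set.extremePoints 𝕜 t) : x ∈ Set.extremePoints 𝕜 s := by
  refine ⟨hx, fun x₁ hx₁ x₂ hx₂ hseg => ?_⟩
  have hfseg : f x ∈ openSegment 𝕜 (f x₁) (f x₂) :=
    image_openSegment 𝕜 f.toAffineMap x₁ x₂ ▸ Set.mem_image_of_mem f hseg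
  exact hf (hfx.2 (hst hx₁) (hst hx₂) hfseg)

theorem rowPartial_eq_sum_Iic (A : Matrix (Fin n) (Fin n) ℝ) (i j : Fin n) :
    rowPartial A i j = ∑ j' ∈ Finset.Iic j, A i j' := by
  rw [rowPartial, Finset.filter_ge_eq_Iic]

def rowPartialMap (n : ℕ) : Matrix (Fin n) (Fin n) ℝ →ₗ[ℝ] (Fin n → Fin n → ℝ) where
  toFun := rowPartial
  map_add' A B := by
    ext i j
    simp [rowPartial_eq_sum_Iic, Finset.sum_add_distrib]
  map_smul' c A := by
    ext i j
    simp [rowPartial_eq_sum_Iic, Finset.mul_sum]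

theorem rowPartialMap_injective (n : ℕ) : Function.Injective (rowPartialMap n) := by
  intro A B h
  funext i
  refine eq_of_sum_Iic_eq (f := A i) (g := B i) fun j => ?_
  simpa [rowPartialMap, rowPartial_eq_sum_Iic] using congrFun (congrFun h i) j

theorem mapsTo_rowPartialMap_ASMPolytope (n : ℕ) :
    Set.MapsTo (rowPartialMap n) (ASMPolytope n)
      (Set.univ.pi fun _ => Set.univ.pi fun _ => Set.Icc 0 1) := by
  refine Set.mapsTo_iff_subset_preimage.2 <| convexHull_min (fun A hA => ?_) <|
    (convex_pi fun _ _ => convex_pi fun _ _ => convex_Icc 0 1).linear_preimage _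
  simp only [Set.mem_preimage, Set.mem_univ_pi]
  intro i j
  rcases hA.2.1 i j with h | h <;> simp [rowPartialMap, h]

/-- the vertices (extreme points) of `ASM_n` are exactly the ASMs. -/
theorem asm_vertices (n : ℕ) :
    Set.extremePoints ℝ (ASMPolytope n) = {A : Matrix (Fin n) (Fin n) ℝ | IsASM A} := by
  refine Set.Subset.antisymm extremePoints_convexHull_subset fun A hA => ?_
  refine mem_extremePoints_of_injective_of_mapsTo (rowPartialMap_injective n)
    (mapsTo_rowPartialMap_ASMPolytope n) (subset_convexHull ℝ _ hA) ?_
  simp only [extremePoints_pi, Set.extremePoints_Icc zero_le_one, Set.mem_univ_pi]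
  exact hA.2.1
end ASMPaper
end

section
/- For n ≥ 3, the dimension of the polytope ASM_n is (n-1)^2. -/
open scoped BigOperators
open scoped Classical

namespace ASMPaper

variable {n : ℕ}

/-! Every ASM has all line sums equal to `1`, so differences of ASMs have zero line sums, and a
matrix with zero line sums is determined by its top-left `(n-1) × (n-1)` block. Conversely, if
`σ` fixes the last index then `P_σ - P_{σ ∘ (a n)}` has top-left block the matrix unit
`E_{a, σ a}`, so the differences of permutation matrices already fill out every block. Hence the
direction of the affine hull of the ASMs is isomorphic to `(n-1) × (n-1)` matrices. -/

noncomputable def permMat (σ : Equiv.Perm (Fin n)) : Matrix (Fin n) (Fin n) ℝ :=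
  fun i j => if σ i = j then 1 else 0

lemma isASM_permMat (σ : Equiv.Perm (Fin n)) : IsASM (permMat σ) := by
  have col (j : Fin n) (s : Finset (Fin n)) :
      ∑ i ∈ s, permMat σ i j = if σ.symm j ∈ s then 1 else 0 := by
    simp only [permMat, ← Equiv.eq_symm_apply, Finset.sum_ite_eq']
  have row (i : Fin n) (s : Finset (Fin n)) :
      ∑ j ∈ s, permMat σ i j = if σ i ∈ s then 1 else 0 := by
    simp only [permMat, Finset.sum_ite_eq]
  refine ⟨fun i j => ?_, fun i j => ?_, fun i j => ?_, fun i => ?_, fun j => ?_⟩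
  · unfold permMat; split_ifs <;> simp
  · rw [rowPartial, row]; split_ifs <;> simp
  · rw [colPartial, col]; split_ifs <;> simp
  · simp [row]
  · simp [col]

lemma permMat_sub_permMat_mul_swap (σ : Equiv.Perm (Fin n)) (a c : Fin n) :
    permMat σ - permMat (σ * Equiv.swap a c) =
      Matrix.single a (σ a) 1 + Matrix.single c (σ c) 1 -
        Matrix.single a (σ c) 1 - Matrix.single c (σ a) 1 := by
  ext x y
  simp only [permMat, Matrix.sub_apply, Matrix.add_apply, Matrix.single, Matrix.of_apply,
    Equiv.Perm.mul_apply, Equiv.swap_apply_def]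
  split_ifs <;> grind

def lineSumZero (n : ℕ) : Submodule ℝ (Matrix (Fin n) (Fin n) ℝ) where
  carrier := {M | (∀ i, ∑ j, M i j = 0) ∧ ∀ j, ∑ i, M i j = 0}
  add_mem' := by
    rintro M N ⟨hMr, hMc⟩ ⟨hNr, hNc⟩
    simp_all [Finset.sum_add_distrib]
  zero_mem' := by simp
  smul_mem' := by
    rintro c M ⟨hr, hc⟩
    simp_all [← Finset.mul_sum]

lemma vectorSpan_setOf_isASM_le_lineSumZero :
    vectorSpan ℝ {A : Matrix (Fin n) (Fin n) ℝ | IsASM A} ≤ lineSumZero n := by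
  rw [vectorSpan_def, Submodule.span_le]
  rintro _ ⟨A, hA, B, hB, rfl⟩
  refine ⟨fun i => ?_, fun j => ?_⟩
  · simp [Finset.sum_sub_distrib, hA.2.2.2.1 i, hB.2.2.2.1 i]
  · simp [Finset.sum_sub_distrib, hA.2.2.2.2 j, hB.2.2.2.2 j]

def topLeftBlock (m : ℕ) : Matrix (Fin (m + 1)) (Fin (m + 1)) ℝ →ₗ[ℝ] Matrix (Fin m) (Fin m) ℝ where
  toFun M := M.submatrix Fin.castSucc Fin.castSucc
  map_add' _ _ := rfl
  map_smul' _ _ := rfl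

@[simp]
lemma topLeftBlock_apply {m : ℕ} (M : Matrix (Fin (m + 1)) (Fin (m + 1)) ℝ) (i j : Fin m) :
    topLeftBlock m M i j = M i.castSucc j.castSucc :=
  rfl

lemma eq_zero_of_mem_lineSumZero_of_topLeftBlock_eq_zero {m : ℕ}
    {M : Matrix (Fin (m + 1)) (Fin (m + 1)) ℝ} (hM : M ∈ lineSumZero (m + 1))
    (h : topLeftBlock m M = 0) : M = 0 := by
  obtain ⟨hr, hc⟩ := hM
  have hblock (i j : Fin m) : M i.castSucc j.castSucc = 0 := by
    simpa using congrFun (congrFun h i) j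
  have hlastCol (i : Fin m) : M i.castSucc (Fin.last m) = 0 := by
    simpa [Fin.sum_univ_castSucc, hblock] using hr i.castSucc
  have hlastRow (j : Fin m) : M (Fin.last m) j.castSucc = 0 := by
    simpa [Fin.sum_univ_castSucc, hblock] using hc j.castSucc
  have hcorner : M (Fin.last m) (Fin.last m) = 0 := by
    simpa [Fin.sum_univ_castSucc, hlastRow] using hr (Fin.last m)
  ext a b
  induction a using Fin.lastCases <;> induction b using Fin.lastCases <;> simp [*]

lemma single_mem_map_topLeftBlock {m : ℕ} (a b : Fin m) :
    Matrix.single a b 1 ∈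
      (vectorSpan ℝ {A : Matrix (Fin (m + 1)) (Fin (m + 1)) ℝ | IsASM A}).map (topLeftBlock m) := by
  set σ := Equiv.swap a.castSucc b.castSucc
  refine ⟨permMat σ - permMat (σ * Equiv.swap a.castSucc (Fin.last m)),
    vsub_mem_vectorSpan ℝ (isASM_permMat _) (isASM_permMat _), ?_⟩
  have hσa : σ a.castSucc = b.castSucc := Equiv.swap_apply_left _ _
  have hσlast : σ (Fin.last m) = Fin.last m :=
    Equiv.swap_apply_of_ne_of_ne (Fin.castSucc_lt_last a).ne' (Fin.castSucc_lt_last b).ne'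
  rw [permMat_sub_permMat_mul_swap σ a.castSucc (Fin.last m), hσa, hσlast]
  ext x y
  simp [Matrix.single, (Fin.castSucc_lt_last _).ne']

lemma map_topLeftBlock_vectorSpan_setOf_isASM (m : ℕ) :
    (vectorSpan ℝ {A : Matrix (Fin (m + 1)) (Fin (m + 1)) ℝ | IsASM A}).map (topLeftBlock m) =
      ⊤ := by
  refine eq_top_iff.2 fun N _ => ?_
  rw [Matrix.matrix_eq_sum_single N]
  refine Submodule.sum_mem _ fun a _ => Submodule.sum_mem _ fun b _ => ?_
  simpa [Matrix.smul_single] using Submodule.smul_mem _ (N a b) (single_mem_map_topLeftBlock a b)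

lemma finrank_vectorSpan_setOf_isASM (m : ℕ) :
    Module.finrank ℝ (vectorSpan ℝ {A : Matrix (Fin (m + 1)) (Fin (m + 1)) ℝ | IsASM A}) =
      m ^ 2 := by
  set V := vectorSpan ℝ {A : Matrix (Fin (m + 1)) (Fin (m + 1)) ℝ | IsASM A}
  have hinj : Function.Injective ((topLeftBlock m).domRestrict V) :=
    (injective_iff_map_eq_zero _).2 fun M hM => Subtype.ext <|
      eq_zero_of_mem_lineSumZero_of_topLeftBlock_eq_zero
        (vectorSpan_setOf_isASM_le_lineSumZero M.2) hM
  have hsurj : Function.Surjective ((topLeftBlock m).domRestrict V) := by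
    rw [← LinearMap.range_eq_top, LinearMap.range_domRestrict]
    exact map_topLeftBlock_vectorSpan_setOf_isASM m
  rw [(LinearEquiv.ofBijective _ ⟨hinj, hsurj⟩).finrank_eq, Module.finrank_matrix]
  simp [sq]

theorem asm_dimension_general (n : ℕ) :
    Module.finrank ℝ (vectorSpan ℝ (ASMPolytope n)) = (n - 1) ^ 2 := by
  rw [ASMPolytope, ← direction_affineSpan, affineSpan_convexHull, direction_affineSpan]
  cases n with
  | zero => simp [Module.finrank_zero_of_subsingleton]
  | succ m => exact finrank_vectorSpan_setOf_isASM m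

/-- for `n ≥ 3`, the dimension of `ASM_n` is `(n-1)^2`. -/
theorem asm_dimension (n : ℕ) (hn : 3 ≤ n) :
    Module.finrank ℝ (vectorSpan ℝ (ASMPolytope n)) = (n - 1) ^ 2 :=
  asm_dimension_general n

end ASMPaper
end

section
/- Let A and B be n×n ASMs and let G be the doubly directed graph of {A,B}. If a_{ij}=1 and b_{ij}=-1 then grid vertex (i,j) has degree 4 in G. Conversely, if (i,j) has degree 4 in G, then a_{ij}·b_{ij} = -1 or a_{ij} = b_{ij} = 0. -/
open scoped BigOperators
open scoped Classical

namespace ASMPaper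

variable {n : ℕ}

/-!
The orientation of the grid edge between positions `k - 1` and `k` of a row (or column)
of an ASM is given by the sum of its first `k` entries, which is `0` or `1`, equal to `0`
for `k = 0` and to `1` for `k = n`. An entry `1` of `A` sits between prefix sums `0, 1`
and an entry `-1` of `B` between `1, 0`: at such a position all four incident edges
disagree, and a `-1` is never on the boundary. Conversely, degree `4` makes both
horizontal edges disagree, so there `B`'s prefix sums are `1` minus `A`'s, whence
`b_{ij} = -a_{ij}`.
-/

open scoped Matrix

section PrefixSum

def prefixSum (v : Fin n → ℝ) (k : ℕ) : ℝ :=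
  ∑ j ∈ Finset.univ.filter (fun j : Fin n => (j : ℕ) < k), v j

variable (v : Fin n → ℝ)

@[simp]
lemma prefixSum_zero : prefixSum v 0 = 0 := by
  simp [prefixSum]

lemma prefixSum_of_le {k : ℕ} (hk : n ≤ k) : prefixSum v k = ∑ j, v j := by
  unfold prefixSum
  rw [Finset.filter_true_of_mem fun j _ => j.is_lt.trans_le hk]

lemma prefixSum_succ (j : Fin n) : prefixSum v (j + 1) = prefixSum v j + v j := by
  unfold prefixSum
  have hsplit : Finset.univ.filter (fun x : Fin n => (x : ℕ) < j + 1)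
      = insert j (Finset.univ.filter (fun x : Fin n => (x : ℕ) < j)) := by
    ext x
    simp only [Finset.mem_filter, Finset.mem_univ, true_and, Finset.mem_insert, Fin.ext_iff]
    omega
  rw [hsplit, Finset.sum_insert (by simp), add_comm]

lemma rowPartial_eq_prefixSum (A : Matrix (Fin n) (Fin n) ℝ) (i j : Fin n) :
    rowPartial A i j = prefixSum (A i) (j + 1) :=
  Finset.sum_congr (Finset.filter_congr fun x _ => by rw [Fin.le_def]; omega) fun _ _ => rfl

lemma colPartial_eq_prefixSum (A : Matrix (Fin n) (Fin n) ℝ) (i j : Fin n) :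
    colPartial A i j = prefixSum (Aᵀ j) (i + 1) :=
  rowPartial_eq_prefixSum Aᵀ j i

end PrefixSum

structure IsAltSignVector (v : Fin n → ℝ) : Prop where
  prefixSum_mem : ∀ k, prefixSum v k = 0 ∨ prefixSum v k = 1
  sum_eq_one : ∑ j, v j = 1

lemma IsASM.transpose {A : Matrix (Fin n) (Fin n) ℝ} (hA : IsASM A) : IsASM Aᵀ :=
  ⟨fun i j => hA.1 j i, fun i j => hA.2.2.1 j i, fun i j => hA.2.1 j i, hA.2.2.2.2,
    hA.2.2.2.1⟩

lemma IsASM.isAltSignVector_row {A : Matrix (Fin n) (Fin n) ℝ} (hA : IsASM A) (i : Fin n) :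
    IsAltSignVector (A i) where
  prefixSum_mem k := by
    rcases Nat.eq_zero_or_pos k with rfl | hk
    · simp
    by_cases hkn : k ≤ n
    · have h := hA.2.1 i ⟨k - 1, by omega⟩
      rwa [rowPartial_eq_prefixSum, Nat.sub_add_cancel hk] at h
    · simp [prefixSum_of_le _ (le_of_not_ge hkn), hA.2.2.2.1 i]
  sum_eq_one := hA.2.2.2.1 i

lemma IsASM.isAltSignVector_col {A : Matrix (Fin n) (Fin n) ℝ} (hA : IsASM A) (j : Fin n) :
    IsAltSignVector (Aᵀ j) :=
  hA.transpose.isAltSignVector_row j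

namespace IsAltSignVector

variable {v w : Fin n → ℝ} {j : Fin n}

lemma prefixSum_of_apply_eq_one (hv : IsAltSignVector v) (h : v j = 1) :
    prefixSum v j = 0 ∧ prefixSum v (j + 1) = 1 := by
  have hstep := prefixSum_succ v j
  rcases hv.prefixSum_mem j with h0 | h0 <;> rcases hv.prefixSum_mem (j + 1) with h1 | h1 <;>
    constructor <;> linarith

lemma prefixSum_of_apply_eq_neg_one (hv : IsAltSignVector v) (h : v j = -1) :
    prefixSum v j = 1 ∧ prefixSum v (j + 1) = 0 := by
  have hstep := prefixSum_succ v j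
  rcases hv.prefixSum_mem j with h0 | h0 <;> rcases hv.prefixSum_mem (j + 1) with h1 | h1 <;>
    constructor <;> linarith

lemma prefixSum_ne_of_apply_eq_one_of_apply_eq_neg_one (hv : IsAltSignVector v)
    (hw : IsAltSignVector w) (hvj : v j = 1) (hwj : w j = -1) :
    (0 < (j : ℕ) ∧ prefixSum v j ≠ prefixSum w j) ∧
      ((j : ℕ) + 1 < n ∧ prefixSum v (j + 1) ≠ prefixSum w (j + 1)) := by
  obtain ⟨hv0, hv1⟩ := hv.prefixSum_of_apply_eq_one hvj
  obtain ⟨hw0, hw1⟩ := hw.prefixSum_of_apply_eq_neg_one hwj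
  refine ⟨⟨Nat.pos_of_ne_zero fun h0 => ?_, by simp [hv0, hw0]⟩,
    ⟨lt_of_not_ge fun hn => ?_, by simp [hv1, hw1]⟩⟩
  · simp [h0] at hw0
  · simp [prefixSum_of_le w hn, hw.sum_eq_one] at hw1

lemma apply_eq_neg_of_prefixSum_ne (hv : IsAltSignVector v) (hw : IsAltSignVector w)
    (h0 : prefixSum v j ≠ prefixSum w j) (h1 : prefixSum v (j + 1) ≠ prefixSum w (j + 1)) :
    w j = -v j := by
  have hvs := prefixSum_succ v j
  have hws := prefixSum_succ w j
  rcases hv.prefixSum_mem j with a0 | a0 <;> rcases hv.prefixSum_mem (j + 1) with a1 | a1 <;>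
    rcases hw.prefixSum_mem j with b0 | b0 <;> rcases hw.prefixSum_mem (j + 1) with b1 | b1 <;>
    simp only [a0, a1, b0, b1, ne_eq, not_true_eq_false] at h0 h1 <;> linarith

end IsAltSignVector

section GridGraph

variable {X : Set (Matrix (Fin n) (Fin n) ℝ)} {i j : Fin n}

/-- The grid edge between positions `k - 1` and `k` of `line A` (a row or a column of `A`)
gets both orientations among the simple flow grids of members of `X`. -/
def IsDoublyDirected (X : Set (Matrix (Fin n) (Fin n) ℝ))
    (line : Matrix (Fin n) (Fin n) ℝ → Fin n → ℝ) (k : ℕ) : Prop :=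
  ∃ A ∈ X, ∃ B ∈ X, prefixSum (line A) k ≠ prefixSum (line B) k

lemma isDoublyDirected_pair_iff {A B : Matrix (Fin n) (Fin n) ℝ}
    {line : Matrix (Fin n) (Fin n) ℝ → Fin n → ℝ} {k : ℕ} :
    IsDoublyDirected {A, B} line k ↔ prefixSum (line A) k ≠ prefixSum (line B) k := by
  refine ⟨?_, fun h => ⟨A, by simp, B, by simp, h⟩⟩
  rintro ⟨A', hA', B', hB', hne⟩
  rcases hA' with rfl | rfl <;> rcases hB' with rfl | rfl
  exacts [absurd rfl hne, hne, hne.symm, absurd rfl hne]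

lemma ddGraph_adj_right_iff {j' : Fin n} (h : (j : ℕ) + 1 = j') :
    (ddGraph X).Adj (i, j) (i, j') ↔ IsDoublyDirected X (· i) j' := by
  have hmin : min (j : ℕ) j' + 1 = j' := by omega
  have hne : j ≠ j' := fun e => by subst e; omega
  simp [ddGraph, hmin, rowPartial_eq_prefixSum, h, hne, IsDoublyDirected]

lemma ddGraph_adj_down_iff {i' : Fin n} (h : (i : ℕ) + 1 = i') :
    (ddGraph X).Adj (i, j) (i', j) ↔ IsDoublyDirected X (fun A => Aᵀ j) i' := by
  have hmin : min (i : ℕ) i' + 1 = i' := by omega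
  have hne : i ≠ i' := fun e => by subst e; omega
  simp [ddGraph, hmin, colPartial_eq_prefixSum, h, hne, IsDoublyDirected]

def gridStep (v w : Fin n × Fin n) : ℤ × ℤ := ((w.1 : ℤ) - v.1, (w.2 : ℤ) - v.2)

def unitSteps : Set (ℤ × ℤ) := {(0, -1), (0, 1), (-1, 0), (1, 0)}

lemma gridStep_injective (v : Fin n × Fin n) : Function.Injective (gridStep v) := by
  rintro ⟨w₁, w₂⟩ ⟨w₁', w₂'⟩ h
  simp only [gridStep, Prod.mk.injEq] at h
  simp only [Prod.mk.injEq, Fin.ext_iff]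
  omega

lemma gridStep_mem_unitSteps {v w : Fin n × Fin n} (h : (ddGraph X).Adj v w) :
    gridStep v w ∈ unitSteps := by
  rcases h with ⟨h₁, h₂, -⟩ | ⟨h₁, h₂, -⟩ <;>
    simp only [unitSteps, gridStep, h₁, Set.mem_insert_iff, Set.mem_singleton_iff,
      Prod.mk.injEq] <;> omega

/-- The displacements to neighbours of `v` are distinct unit steps, and there are four
unit steps. -/
lemma ddDegree_eq_four_iff_unitSteps_subset {v : Fin n × Fin n} :
    ddDegree X v = 4 ↔ unitSteps ⊆ gridStep v '' (ddGraph X).neighborSet v := by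
  have hsub : gridStep v '' (ddGraph X).neighborSet v ⊆ unitSteps := by
    rintro _ ⟨w, hw, rfl⟩
    exact gridStep_mem_unitSteps hw
  have hcard : (gridStep v '' (ddGraph X).neighborSet v).ncard = ddDegree X v :=
    Set.ncard_image_of_injective _ (gridStep_injective v)
  have hfour : unitSteps.ncard = 4 := by
    rw [unitSteps, Set.ncard_eq_toFinset_card']
    rfl
  constructor
  · intro h
    exact (Set.eq_of_subset_of_ncard_le hsub (by omega)
      (Set.finite_of_ncard_ne_zero (by omega))).symm.subset
  · intro h
    rw [← hcard, Set.Subset.antisymm hsub h, hfour]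

lemma mem_gridStep_image_left_iff :
    ((0, -1) : ℤ × ℤ) ∈ gridStep (i, j) '' (ddGraph X).neighborSet (i, j) ↔
      0 < (j : ℕ) ∧ IsDoublyDirected X (· i) j := by
  constructor
  · rintro ⟨⟨i', j'⟩, hadj, hstep⟩
    simp only [gridStep, Prod.mk.injEq] at hstep
    obtain rfl : i' = i := Fin.ext (by omega)
    have hj : (j' : ℕ) + 1 = j := by omega
    exact ⟨by omega, (ddGraph_adj_right_iff hj).1 hadj.symm⟩
  · rintro ⟨hj, hdd⟩
    have hj' : ((⟨j - 1, by omega⟩ : Fin n) : ℕ) + 1 = j := Nat.sub_add_cancel hj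
    refine ⟨(i, ⟨j - 1, by omega⟩), ((ddGraph_adj_right_iff hj').2 hdd).symm, ?_⟩
    simp only [gridStep, Prod.mk.injEq]
    omega

lemma mem_gridStep_image_right_iff :
    ((0, 1) : ℤ × ℤ) ∈ gridStep (i, j) '' (ddGraph X).neighborSet (i, j) ↔
      (j : ℕ) + 1 < n ∧ IsDoublyDirected X (· i) (j + 1) := by
  constructor
  · rintro ⟨⟨i', j'⟩, hadj, hstep⟩
    simp only [gridStep, Prod.mk.injEq] at hstep
    obtain rfl : i' = i := Fin.ext (by omega)
    have hj : (j : ℕ) + 1 = j' := by omega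
    exact ⟨hj ▸ j'.is_lt, hj ▸ (ddGraph_adj_right_iff hj).1 hadj⟩
  · rintro ⟨hj, hdd⟩
    refine ⟨(i, ⟨j + 1, hj⟩), (ddGraph_adj_right_iff rfl).2 hdd, ?_⟩
    simp [gridStep]

lemma mem_gridStep_image_up_iff :
    ((-1, 0) : ℤ × ℤ) ∈ gridStep (i, j) '' (ddGraph X).neighborSet (i, j) ↔
      0 < (i : ℕ) ∧ IsDoublyDirected X (fun A => Aᵀ j) i := by
  constructor
  · rintro ⟨⟨i', j'⟩, hadj, hstep⟩
    simp only [gridStep, Prod.mk.injEq] at hstep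
    obtain rfl : j' = j := Fin.ext (by omega)
    have hi : (i' : ℕ) + 1 = i := by omega
    exact ⟨by omega, (ddGraph_adj_down_iff hi).1 hadj.symm⟩
  · rintro ⟨hi, hdd⟩
    have hi' : ((⟨i - 1, by omega⟩ : Fin n) : ℕ) + 1 = i := Nat.sub_add_cancel hi
    refine ⟨(⟨i - 1, by omega⟩, j), ((ddGraph_adj_down_iff hi').2 hdd).symm, ?_⟩
    simp only [gridStep, Prod.mk.injEq]
    omega

lemma mem_gridStep_image_down_iff :
    ((1, 0) : ℤ × ℤ) ∈ gridStep (i, j) '' (ddGraph X).neighborSet (i, j) ↔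
      (i : ℕ) + 1 < n ∧ IsDoublyDirected X (fun A => Aᵀ j) (i + 1) := by
  constructor
  · rintro ⟨⟨i', j'⟩, hadj, hstep⟩
    simp only [gridStep, Prod.mk.injEq] at hstep
    obtain rfl : j' = j := Fin.ext (by omega)
    have hi : (i : ℕ) + 1 = i' := by omega
    exact ⟨hi ▸ i'.is_lt, hi ▸ (ddGraph_adj_down_iff hi).1 hadj⟩
  · rintro ⟨hi, hdd⟩
    refine ⟨(⟨i + 1, hi⟩, j), (ddGraph_adj_down_iff rfl).2 hdd, ?_⟩
    simp [gridStep]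

theorem ddDegree_eq_four_iff :
    ddDegree X (i, j) = 4 ↔
      ((0 < (j : ℕ) ∧ IsDoublyDirected X (· i) j) ∧
        ((j : ℕ) + 1 < n ∧ IsDoublyDirected X (· i) (j + 1))) ∧
      ((0 < (i : ℕ) ∧ IsDoublyDirected X (fun A => Aᵀ j) i) ∧
        ((i : ℕ) + 1 < n ∧ IsDoublyDirected X (fun A => Aᵀ j) (i + 1))) := by
  rw [ddDegree_eq_four_iff_unitSteps_subset, unitSteps]
  simp only [Set.insert_subset_iff, Set.singleton_subset_iff, mem_gridStep_image_left_iff,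
    mem_gridStep_image_right_iff, mem_gridStep_image_up_iff, mem_gridStep_image_down_iff,
    and_assoc]

end GridGraph

/-- if `a_{ij} = 1` and `b_{ij} = -1` then `(i,j)` has degree 4 in the
doubly directed graph of `{A,B}`; conversely degree 4 forces `a_{ij}·b_{ij} = -1` or
`a_{ij} = b_{ij} = 0`. -/
theorem degree_four (n : ℕ) (A B : Matrix (Fin n) (Fin n) ℝ)
    (hA : IsASM A) (hB : IsASM B) (i j : Fin n) :
    ((A i j = 1 ∧ B i j = -1) →
      ddDegree ({A, B} : Set (Matrix (Fin n) (Fin n) ℝ)) (i, j) = 4) ∧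
    (ddDegree ({A, B} : Set (Matrix (Fin n) (Fin n) ℝ)) (i, j) = 4 →
      A i j * B i j = -1 ∨ (A i j = 0 ∧ B i j = 0)) := by
  have rowA := hA.isAltSignVector_row i
  have rowB := hB.isAltSignVector_row i
  simp only [ddDegree_eq_four_iff, isDoublyDirected_pair_iff]
  refine ⟨fun ⟨ha, hb⟩ => ⟨?_, ?_⟩, fun h => ?_⟩
  · exact rowA.prefixSum_ne_of_apply_eq_one_of_apply_eq_neg_one rowB ha hb
  · exact (hA.isAltSignVector_col j).prefixSum_ne_of_apply_eq_one_of_apply_eq_neg_one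
      (hB.isAltSignVector_col j) ha hb
  have hba : B i j = -A i j := rowA.apply_eq_neg_of_prefixSum_ne rowB h.1.1.2 h.1.2.2
  rcases hA.1 i j with ha | ha | ha <;> simp [hba, ha]
end ASMPaper
end

section
/- If X is a set of n×n ASMs with |X| ≥ 2, then every edge of the doubly directed graph G(F(X)) is contained in a cycle; equivalently, every connected component of G(F(X)) is 2-edge-connected. -/
/-!
Every edge of `G(F(X))` is already an edge of `G(F({A, B}))` for some `A, B ∈ X`, and
`G(F({A, B})) ≤ G(F(X))`, so it suffices to find a cycle in the graph of a pair. Along row `i` the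
differences `W^A_{ik} - W^B_{ik}` lie in `{-1, 0, 1}`, vanish at the last column and jump by
`a_{ij} - b_{ij}` at column `j`; hence the horizontal degree of `(i, j)` is odd exactly when
`a_{ij} - b_{ij} = ±1`. The same holds vertically, so every vertex of `G(F({A, B}))` has even
degree. In a finite graph with all degrees even no edge `vw` is a bridge: after deleting it, `v`
would be the only vertex of odd degree in its component.
-/

open scoped BigOperators
open scoped Classical

namespace SimpleGraph

variable {V : Type*} [Fintype V] [DecidableEq V] {G : SimpleGraph V} [DecidableRel G.Adj]
  {u v w : V}

lemma degree_deleteEdges_edge_add_one (h : G.Adj v w) :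
    (G.deleteEdges {s(v, w)}).degree v + 1 = G.degree v := by
  have : (G.deleteEdges {s(v, w)}).neighborFinset v = (G.neighborFinset v).erase w := by
    ext x
    simp only [mem_neighborFinset, Finset.mem_erase, deleteEdges_adj, Set.mem_singleton_iff,
      Sym2.eq, Sym2.rel_iff']
    aesop
  rw [← card_neighborFinset_eq_degree, ← card_neighborFinset_eq_degree, this,
    Finset.card_erase_add_one (by simpa using h)]

lemma degree_deleteEdges_edge_of_ne (hv : u ≠ v) (hw : u ≠ w) :
    (G.deleteEdges {s(v, w)}).degree u = G.degree u := by
  have : (G.deleteEdges {s(v, w)}).neighborFinset u = G.neighborFinset u := by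
    ext x
    simp [hv, hw]
  rw [← card_neighborFinset_eq_degree, ← card_neighborFinset_eq_degree, this]

theorem reachable_deleteEdges_of_forall_even_degree (hdeg : ∀ x, Even (G.degree x))
    (h : G.Adj v w) : (G.deleteEdges {s(v, w)}).Reachable v w := by
  by_contra hvw
  set G' := G.deleteEdges {s(v, w)}
  set C : Set V := {x | G'.Reachable v x}
  have hdegC : ∀ x (hx : x ∈ C), (G'.induce C).degree ⟨x, hx⟩ = G'.degree x := fun x hx =>
    degree_induce_of_neighborSet_subset fun _ hy => Reachable.trans hx (Adj.reachable hy)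
  have hv : Odd (G'.degree v) := by
    simpa only [← degree_deleteEdges_edge_add_one h, Nat.even_add_one, Nat.not_even_iff_odd]
      using hdeg v
  obtain ⟨⟨x, hx⟩, hxv, hodd⟩ := (G'.induce C).exists_ne_odd_degree_of_exists_odd_degree
    ⟨v, Reachable.refl v⟩ (by rwa [hdegC])
  have hxw : x ≠ w := by rintro rfl; exact hvw hx
  rw [hdegC, degree_deleteEdges_edge_of_ne (Subtype.coe_ne_coe.mpr hxv) hxw] at hodd
  exact Nat.not_odd_iff_even.mpr (hdeg x) hodd

theorem exists_isCycle_mem_edges_of_forall_even_degree (hdeg : ∀ x, Even (G.degree x))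
    (h : G.Adj v w) : ∃ (u : V) (p : G.Walk u u), p.IsCycle ∧ s(v, w) ∈ p.edges :=
  adj_and_reachable_delete_edges_iff_exists_cycle.mp
    ⟨h, reachable_deleteEdges_of_forall_even_degree hdeg h⟩

end SimpleGraph

namespace ASMPaper

variable {n : ℕ}

open Finset
open scoped Matrix

section PartialSums

variable (A : Matrix (Fin n) (Fin n) ℝ) (i : Fin n) {j k : Fin n}

lemma rowPartial_of_val_eq_zero (hj : (j : ℕ) = 0) : rowPartial A i j = A i j := by
  have : univ.filter (fun j' : Fin n => j' ≤ j) = {j} := by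
    ext x
    simp [Fin.le_def, Fin.ext_iff, hj]
  rw [rowPartial, this, sum_singleton]

lemma rowPartial_eq_rowPartial_add (hk : (k : ℕ) + 1 = j) :
    rowPartial A i j = rowPartial A i k + A i j := by
  have : univ.filter (fun j' : Fin n => j' ≤ j) =
      insert j (univ.filter fun j' : Fin n => j' ≤ k) := by
    ext x
    simp only [mem_filter, mem_univ, true_and, mem_insert, Fin.le_def, Fin.ext_iff]
    omega
  rw [rowPartial, rowPartial, this, sum_insert, add_comm]
  simp only [mem_filter, mem_univ, true_and, Fin.le_def]
  omega

lemma rowPartial_eq_sum_of_val_add_one_eq (hj : (j : ℕ) + 1 = n) :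
    rowPartial A i j = ∑ j', A i j' := by
  have : univ.filter (fun j' : Fin n => j' ≤ j) = univ := by
    ext x
    simp only [mem_filter, mem_univ, true_and, iff_true, Fin.le_def]
    omega
  rw [rowPartial, this]

end PartialSums

/-- `f k` labels the edge `{k, k + 1}` of the path on `Fin n`; these are the neighbours of `j`
along edges with nonzero label. -/
noncomputable def lineNeighbors (f : Fin n → ℝ) (j : Fin n) : Finset (Fin n) :=
  univ.filter fun k => ((k : ℕ) + 1 = j ∨ (j : ℕ) + 1 = k) ∧ f (min j k) ≠ 0

lemma lineNeighbors_eq_union (f : Fin n → ℝ) (j : Fin n) :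
    lineNeighbors f j = univ.filter (fun k : Fin n => (k : ℕ) + 1 = j ∧ f k ≠ 0) ∪
      univ.filter (fun k : Fin n => (j : ℕ) + 1 = k ∧ f j ≠ 0) := by
  ext k
  simp only [lineNeighbors, mem_filter, mem_univ, true_and, mem_union]
  constructor
  · rintro ⟨hk | hk, hf⟩
    · rw [min_eq_right (Fin.le_def.mpr (by omega))] at hf; exact Or.inl ⟨hk, hf⟩
    · rw [min_eq_left (Fin.le_def.mpr (by omega))] at hf; exact Or.inr ⟨hk, hf⟩
  · rintro (⟨hk, hf⟩ | ⟨hk, hf⟩)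
    · exact ⟨Or.inl hk, by rwa [min_eq_right (Fin.le_def.mpr (by omega))]⟩
    · exact ⟨Or.inr hk, by rwa [min_eq_left (Fin.le_def.mpr (by omega))]⟩

lemma card_lineNeighbors {f : Fin n → ℝ} {j : Fin n} {d : ℝ}
    (hlast : ∀ k : Fin n, (k : ℕ) + 1 = n → f k = 0)
    (h0 : (j : ℕ) = 0 → f j = d) (hsucc : ∀ k : Fin n, (k : ℕ) + 1 = j → f j = f k + d) :
    #(lineNeighbors f j) = (if f j - d ≠ 0 then 1 else 0) + (if f j ≠ 0 then 1 else 0) := by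
  set L := univ.filter fun k : Fin n => (k : ℕ) + 1 = j ∧ f k ≠ 0
  set R := univ.filter fun k : Fin n => (j : ℕ) + 1 = k ∧ f j ≠ 0
  have hL : #L = if f j - d ≠ 0 then 1 else 0 := by
    by_cases hj : (j : ℕ) = 0
    · rw [h0 hj, sub_self, if_neg (not_not.mpr rfl), card_eq_zero, filter_eq_empty_iff]
      omega
    · set k₀ : Fin n := ⟨j - 1, by omega⟩
      rw [hsucc k₀ (by simp only [k₀]; omega), add_sub_cancel_right]
      have : L = univ.filter fun k => k = k₀ ∧ f k ≠ 0 := by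
        ext k
        simp only [L, k₀, mem_filter, mem_univ, true_and, Fin.ext_iff]
        exact and_congr_left fun _ => by omega
      rw [this, filter_and, filter_eq', if_pos (mem_univ _)]
      split_ifs with h <;> simp [h]
  have hR : #R = if f j ≠ 0 then 1 else 0 := by
    by_cases hj : (j : ℕ) + 1 = n
    · rw [hlast j hj, if_neg (not_not.mpr rfl), card_eq_zero, filter_eq_empty_iff]
      omega
    · set k₁ : Fin n := ⟨j + 1, by omega⟩
      have : R = univ.filter fun k => k = k₁ ∧ f j ≠ 0 := by
        ext k
        simp only [R, k₁, mem_filter, mem_univ, true_and, Fin.ext_iff]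
        exact and_congr_left fun _ => by omega
      rw [this, filter_and, filter_eq', if_pos (mem_univ _)]
      split_ifs with h <;> simp [h]
  rw [lineNeighbors_eq_union, card_union_of_disjoint (disjoint_filter.mpr fun _ _ _ _ => by omega),
    hL, hR]

lemma sub_eq_zero_or_eq_one_or_eq_neg_one {x y : ℝ} (hx : x = 0 ∨ x = 1)
    (hy : y = 0 ∨ y = 1) : x - y = 0 ∨ x - y = 1 ∨ x - y = -1 := by
  rcases hx with rfl | rfl <;> rcases hy with rfl | rfl <;> norm_num

lemma odd_ite_ne_zero_add_ite_ne_zero_iff {p q : ℝ} (hp : p = 0 ∨ p = 1 ∨ p = -1)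
    (hq : q = 0 ∨ q = 1 ∨ q = -1) :
    Odd ((if p ≠ 0 then 1 else 0) + (if q ≠ 0 then 1 else 0) : ℕ) ↔
      q - p = 1 ∨ q - p = -1 := by
  rcases hp with rfl | rfl | rfl <;> rcases hq with rfl | rfl | rfl <;> norm_num

namespace IsASM

variable {A B : Matrix (Fin n) (Fin n) ℝ}

lemma transpose_s8 (hA : IsASM A) : IsASM Aᵀ :=
  ⟨fun i j => hA.1 j i, fun i j => hA.2.2.1 j i, fun i j => hA.2.1 j i, hA.2.2.2.2, hA.2.2.2.1⟩

lemma rowPartial_sub_eq_zero_or_eq_one (hA : IsASM A) (i j : Fin n) :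
    rowPartial A i j - A i j = 0 ∨ rowPartial A i j - A i j = 1 := by
  by_cases hj : (j : ℕ) = 0
  · exact Or.inl (by rw [rowPartial_of_val_eq_zero A i hj, sub_self])
  · rw [rowPartial_eq_rowPartial_add A i (k := ⟨j - 1, by omega⟩) (by simp only; omega),
      add_sub_cancel_right]
    exact hA.2.1 i _

lemma odd_card_lineNeighbors_rowPartial_sub_iff (hA : IsASM A) (hB : IsASM B) (i j : Fin n) :
    Odd #(lineNeighbors (fun k => rowPartial A i k - rowPartial B i k) j) ↔
      A i j - B i j = 1 ∨ A i j - B i j = -1 := by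
  have hlast (k : Fin n) (hk : (k : ℕ) + 1 = n) : rowPartial A i k - rowPartial B i k = 0 := by
    rw [rowPartial_eq_sum_of_val_add_one_eq A i hk, rowPartial_eq_sum_of_val_add_one_eq B i hk,
      hA.2.2.2.1, hB.2.2.2.1, sub_self]
  have h0 (hj : (j : ℕ) = 0) : rowPartial A i j - rowPartial B i j = A i j - B i j := by
    rw [rowPartial_of_val_eq_zero A i hj, rowPartial_of_val_eq_zero B i hj]
  have hsucc (k : Fin n) (hk : (k : ℕ) + 1 = j) : rowPartial A i j - rowPartial B i j =
      (rowPartial A i k - rowPartial B i k) + (A i j - B i j) := by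
    rw [rowPartial_eq_rowPartial_add A i hk, rowPartial_eq_rowPartial_add B i hk]; ring
  have hbefore : rowPartial A i j - rowPartial B i j - (A i j - B i j) =
      (rowPartial A i j - A i j) - (rowPartial B i j - B i j) := by ring
  rw [card_lineNeighbors hlast h0 hsucc, odd_ite_ne_zero_add_ite_ne_zero_iff, sub_sub_cancel]
  · rw [hbefore]
    exact sub_eq_zero_or_eq_one_or_eq_neg_one (hA.rowPartial_sub_eq_zero_or_eq_one i j)
      (hB.rowPartial_sub_eq_zero_or_eq_one i j)
  · exact sub_eq_zero_or_eq_one_or_eq_neg_one (hA.2.1 i j) (hB.2.1 i j)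

end IsASM

lemma exists_mem_pair_ne_iff {α β : Type*} (a b : α) (f : α → β) :
    (∃ x ∈ ({a, b} : Set α), ∃ y ∈ ({a, b} : Set α), f x ≠ f y) ↔ f a ≠ f b := by
  simpa using Ne.symm

lemma ddGraph_pair_adj_iff {A B : Matrix (Fin n) (Fin n) ℝ} {v w : Fin n × Fin n} :
    (ddGraph {A, B}).Adj v w ↔
      (v.1 = w.1 ∧ ((v.2 : ℕ) + 1 = w.2 ∨ (w.2 : ℕ) + 1 = v.2) ∧
        rowPartial A v.1 (min v.2 w.2) ≠ rowPartial B v.1 (min v.2 w.2)) ∨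
      (v.2 = w.2 ∧ ((v.1 : ℕ) + 1 = w.1 ∨ (w.1 : ℕ) + 1 = v.1) ∧
        colPartial A (min v.1 w.1) v.2 ≠ colPartial B (min v.1 w.1) v.2) := by
  show (_ ∨ _) ↔ _
  rw [exists_mem_pair_ne_iff (f := fun M => rowPartial M v.1 (min v.2 w.2)),
    exists_mem_pair_ne_iff (f := fun M => colPartial M (min v.1 w.1) v.2)]

lemma degree_ddGraph_pair (A B : Matrix (Fin n) (Fin n) ℝ) (i j : Fin n) :
    (ddGraph {A, B}).degree (i, j) =
      #(lineNeighbors (fun k => rowPartial A i k - rowPartial B i k) j) +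
        #(lineNeighbors (fun k => colPartial A k j - colPartial B k j) i) := by
  have hnbr : (ddGraph {A, B}).neighborFinset (i, j) =
      (lineNeighbors (fun k => rowPartial A i k - rowPartial B i k) j).map (.sectR i _) ∪
        (lineNeighbors (fun k => colPartial A k j - colPartial B k j) i).map (.sectL _ j) := by
    ext ⟨i', j'⟩
    simp only [SimpleGraph.mem_neighborFinset, ddGraph_pair_adj_iff, lineNeighbors, sub_ne_zero,
      mem_union, mem_map, mem_filter, mem_univ, true_and, Function.Embedding.sectR_apply,
      Function.Embedding.sectL_apply, Prod.mk.injEq, exists_eq_right_right, existsAndEq]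
    grind
  rw [← SimpleGraph.card_neighborFinset_eq_degree, hnbr, card_union_of_disjoint, card_map,
    card_map]
  simp only [disjoint_left, mem_map, Function.Embedding.sectR_apply,
    Function.Embedding.sectL_apply, lineNeighbors, mem_filter, mem_univ, true_and]
  rintro _ ⟨k, ⟨hk, -⟩, rfl⟩ ⟨k', -, hk'⟩
  obtain ⟨-, rfl⟩ := Prod.mk.inj hk'
  omega

lemma IsASM.even_degree_ddGraph_pair {A B : Matrix (Fin n) (Fin n) ℝ} (hA : IsASM A)
    (hB : IsASM B) (v : Fin n × Fin n) : Even ((ddGraph {A, B}).degree v) := by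
  obtain ⟨i, j⟩ := v
  rw [degree_ddGraph_pair, Nat.even_add, ← Nat.not_odd_iff_even, ← Nat.not_odd_iff_even,
    hA.odd_card_lineNeighbors_rowPartial_sub_iff hB]
  -- the column line of `A, B` through `(i, j)` is definitionally the row line of `Aᵀ, Bᵀ`
  exact not_congr (hA.transpose_s8.odd_card_lineNeighbors_rowPartial_sub_iff hB.transpose_s8 j i).symm

lemma ddGraph_mono {X Y : Set (Matrix (Fin n) (Fin n) ℝ)} (h : X ⊆ Y) :
    ddGraph X ≤ ddGraph Y := by
  rintro v w (⟨h1, h2, A, hA, B, hB, h3⟩ | ⟨h1, h2, A, hA, B, hB, h3⟩)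
  · exact Or.inl ⟨h1, h2, A, h hA, B, h hB, h3⟩
  · exact Or.inr ⟨h1, h2, A, h hA, B, h hB, h3⟩

lemma exists_pair_ddGraph_adj {X : Set (Matrix (Fin n) (Fin n) ℝ)} {v w : Fin n × Fin n}
    (h : (ddGraph X).Adj v w) : ∃ A ∈ X, ∃ B ∈ X, (ddGraph {A, B}).Adj v w := by
  rcases h with ⟨h1, h2, A, hA, B, hB, h3⟩ | ⟨h1, h2, A, hA, B, hB, h3⟩
  · exact ⟨A, hA, B, hB, ddGraph_pair_adj_iff.mpr (Or.inl ⟨h1, h2, h3⟩)⟩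
  · exact ⟨A, hA, B, hB, ddGraph_pair_adj_iff.mpr (Or.inr ⟨h1, h2, h3⟩)⟩

theorem edge_in_cycle_general (n : ℕ) (X : Set (Matrix (Fin n) (Fin n) ℝ))
    (hX : ∀ A ∈ X, IsASM A)
    (v w : Fin n × Fin n) (h : (ddGraph X).Adj v w) :
    ∃ (u : Fin n × Fin n) (p : (ddGraph X).Walk u u),
      p.IsCycle ∧ s(v, w) ∈ p.edges := by
  obtain ⟨A, hA, B, hB, hAB⟩ := exists_pair_ddGraph_adj h
  have hle : ddGraph {A, B} ≤ ddGraph X := ddGraph_mono (Set.pair_subset hA hB)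
  obtain ⟨u, p, hp, hvw⟩ := SimpleGraph.exists_isCycle_mem_edges_of_forall_even_degree
    ((hX A hA).even_degree_ddGraph_pair (hX B hB)) hAB
  exact ⟨u, p.mapLe hle, hp.mapLe hle, by rwa [SimpleGraph.Walk.edges_mapLe_eq_edges]⟩

/-- every edge of the doubly directed graph of a set of at least two
ASMs is contained in a cycle. -/
theorem edge_in_cycle (n : ℕ) (X : Set (Matrix (Fin n) (Fin n) ℝ))
    (hX : ∀ A ∈ X, IsASM A) (h2 : 2 ≤ X.ncard)
    (v w : Fin n × Fin n) (h : (ddGraph X).Adj v w) :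
    ∃ (u : Fin n × Fin n) (p : (ddGraph X).Walk u u),
      p.IsCycle ∧ s(v, w) ∈ p.edges :=
  edge_in_cycle_general n X hX v w h

end ASMPaper
end

section
/- Every face of ASM_n is a 2-level polytope: for each facet-defining hyperplane H of a face F there is a parallel hyperplane H' containing all vertices of F not in H. -/
open scoped BigOperators
open scoped Classical

namespace ASMPaper

variable {n : ℕ}

/-!
The proof rests on the inequality description of `ASM_n`: it is the set of matrices with row and
column sums `1` whose partial row and column sums lie in `[0, 1]`. Each partial sum is a
difference of two corner sums `∑_{i < a, j < b} x i j`, and at a point of this set it is tight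
(equal to `0` or `1`) exactly when the two corner sums have the same fractional part. Moving all
corner sums that share one fractional part by `± ε` therefore keeps every tight constraint tight,
and writes a point with a fractional partial sum as a convex combination of two points with more
tight constraints.

For the facet `G = F ∩ {ℓ = c}` of a face `F`, pick `m ∈ G` with the fewest tight constraints;
those are constant on `G`. If `A` is a vertex of `F` off `G`, some constraint `e` tight at `m`
differs at `A`, or else `G` would contain a point `m + ε (A - m)`. Both `ℓ` and `e` are constant on
`G`, whose direction is a hyperplane in that of `F`, and `e` is not constant on `F`; so points of
`F` with equal `e`-values have equal `ℓ`-values. On vertices `e` takes only the values `0` and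
`1`, and off `G` never its value at `m`, hence `ℓ` takes a single value on the vertices off `G`.
-/

local notation "Mat" => Matrix (Fin n) (Fin n) ℝ

lemma sum_filter_lt_eq_sum_range {M : Type*} [AddCommMonoid M] (f : ℕ → M) {m : ℕ} (hm : m ≤ n) :
    ∑ i ∈ Finset.univ.filter (fun i : Fin n => (i : ℕ) < m), f i = ∑ a ∈ Finset.range m, f a := by
  rw [Finset.sum_filter, Fin.sum_univ_eq_sum_range (fun a => if a < m then f a else 0),
    ← Finset.sum_filter]
  congr 1
  ext a
  simp only [Finset.mem_filter, Finset.mem_range]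
  omega

def cornerSum (p : ℕ × ℕ) : Mat →ₗ[ℝ] ℝ where
  toFun x := ∑ i : Fin n, ∑ j : Fin n, if (i : ℕ) < p.1 ∧ (j : ℕ) < p.2 then x i j else 0
  map_add' x y := by simp only [Matrix.add_apply, ite_add_zero, Finset.sum_add_distrib]
  map_smul' a x := by simp [Finset.mul_sum]

lemma cornerSum_apply (p : ℕ × ℕ) (x : Mat) : cornerSum p x =
    ∑ i : Fin n, ∑ j : Fin n, if (i : ℕ) < p.1 ∧ (j : ℕ) < p.2 then x i j else 0 := rfl

lemma cornerSum_zero_fst (b : ℕ) (x : Mat) : cornerSum (0, b) x = 0 := by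
  simp [cornerSum_apply]

lemma cornerSum_zero_snd (a : ℕ) (x : Mat) : cornerSum (a, 0) x = 0 := by
  simp [cornerSum_apply]

lemma cornerSum_succ_fst_sub (i : Fin n) (b : ℕ) (x : Mat) :
    cornerSum ((i : ℕ) + 1, b) x - cornerSum (i, b) x =
      ∑ j ∈ Finset.univ.filter (fun j : Fin n => (j : ℕ) < b), x i j := by
  rw [cornerSum_apply, cornerSum_apply, ← Finset.sum_sub_distrib, Finset.sum_eq_single i]
  · rw [Finset.sum_filter, ← Finset.sum_sub_distrib]
    refine Finset.sum_congr rfl fun j _ => ?_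
    split_ifs <;> simp_all
  · intro i' _ hi'
    rw [← Finset.sum_sub_distrib]
    refine Finset.sum_eq_zero fun j _ => ?_
    have : (i' : ℕ) ≠ i := fun h => hi' (Fin.ext h)
    split_ifs <;> simp only at * <;> first | (exfalso; omega) | ring
  · simp

lemma cornerSum_succ_snd_sub (j : Fin n) (a : ℕ) (x : Mat) :
    cornerSum (a, (j : ℕ) + 1) x - cornerSum (a, j) x =
      ∑ i ∈ Finset.univ.filter (fun i : Fin n => (i : ℕ) < a), x i j := by
  rw [cornerSum_apply, cornerSum_apply, ← Finset.sum_sub_distrib, Finset.sum_filter]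
  refine Finset.sum_congr rfl fun i _ => ?_
  rw [← Finset.sum_sub_distrib, Finset.sum_eq_single j]
  · split_ifs <;> simp_all
  · intro j' _ hj'
    have : (j' : ℕ) ≠ j := fun h => hj' (Fin.ext h)
    split_ifs <;> simp only at * <;> first | (exfalso; omega) | ring
  · simp

def ofCornerSums (h : ℕ × ℕ → ℝ) : Mat :=
  Matrix.of fun i j =>
    h ((i : ℕ) + 1, (j : ℕ) + 1) - h (i, (j : ℕ) + 1) - h ((i : ℕ) + 1, j) + h (i, j)

lemma cornerSum_ofCornerSums (h : ℕ × ℕ → ℝ) {a b : ℕ} (ha : a ≤ n) (hb : b ≤ n) :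
    cornerSum (a, b) (ofCornerSums (n := n) h) = h (a, b) - h (a, 0) - h (0, b) + h (0, 0) := by
  induction a with
  | zero => rw [cornerSum_zero_fst]; ring
  | succ a ih =>
    have hrow := cornerSum_succ_fst_sub ⟨a, ha⟩ b (ofCornerSums h)
    have htel : ∑ j ∈ Finset.univ.filter (fun j : Fin n => (j : ℕ) < b), ofCornerSums h ⟨a, ha⟩ j
        = ∑ j ∈ Finset.range b, ((h (a + 1, j + 1) - h (a, j + 1)) - (h (a + 1, j) - h (a, j))) :=
      (Finset.sum_congr rfl fun j _ => by simp only [ofCornerSums, Matrix.of_apply]; ring).trans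
        (sum_filter_lt_eq_sum_range
          (fun j => (h (a + 1, j + 1) - h (a, j + 1)) - (h (a + 1, j) - h (a, j))) hb)
    rw [htel, Finset.sum_range_sub (fun j => h (a + 1, j) - h (a, j))] at hrow
    simp only at hrow
    rw [ih (by omega)] at hrow
    linarith

/-- `.inl (i, j)` indexes the row partial sum `W_{ij}`, `.inr (i, j)` the column partial sum
`N_{ij}`. -/
abbrev Constraint (n : ℕ) := (Fin n × Fin n) ⊕ (Fin n × Fin n)

def Constraint.upper : Constraint n → ℕ × ℕ
  | .inl (i, j) | .inr (i, j) => ((i : ℕ) + 1, (j : ℕ) + 1)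

def Constraint.lower : Constraint n → ℕ × ℕ
  | .inl (i, j) => (i, (j : ℕ) + 1)
  | .inr (i, j) => ((i : ℕ) + 1, j)

def partialSum (e : Constraint n) : Mat →ₗ[ℝ] ℝ := cornerSum e.upper - cornerSum e.lower

lemma partialSum_apply (e : Constraint n) (x : Mat) :
    partialSum e x = cornerSum e.upper x - cornerSum e.lower x := rfl

lemma partialSum_inl (i j : Fin n) (x : Mat) : partialSum (.inl (i, j)) x = rowPartial x i j := by
  rw [partialSum_apply, Constraint.upper, Constraint.lower, cornerSum_succ_fst_sub, rowPartial]
  exact Finset.sum_congr (Finset.filter_congr fun j' _ => by rw [Fin.le_def]; omega) fun _ _ => rfl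

lemma partialSum_inr (i j : Fin n) (x : Mat) : partialSum (.inr (i, j)) x = colPartial x i j := by
  rw [partialSum_apply, Constraint.upper, Constraint.lower, cornerSum_succ_snd_sub, colPartial]
  exact Finset.sum_congr (Finset.filter_congr fun i' _ => by rw [Fin.le_def]; omega) fun _ _ => rfl

lemma partialSum_inl_of_succ_eq (i : Fin n) {j : Fin n} (hj : (j : ℕ) + 1 = n) (x : Mat) :
    partialSum (.inl (i, j)) x = ∑ j', x i j' := by
  rw [partialSum_apply, Constraint.upper, Constraint.lower, cornerSum_succ_fst_sub, hj]
  exact Finset.sum_congr (Finset.filter_true_of_mem fun j' _ => j'.isLt) fun _ _ => rfl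

lemma partialSum_inr_of_succ_eq {i : Fin n} (hi : (i : ℕ) + 1 = n) (j : Fin n) (x : Mat) :
    partialSum (.inr (i, j)) x = ∑ i', x i' j := by
  rw [partialSum_apply, Constraint.upper, Constraint.lower, cornerSum_succ_snd_sub, hi]
  exact Finset.sum_congr (Finset.filter_true_of_mem fun i' _ => i'.isLt) fun _ _ => rfl

lemma partialSum_ofCornerSums (h : ℕ × ℕ → ℝ) (hfst : ∀ a, h (a, 0) = h (0, 0))
    (hsnd : ∀ b, h (0, b) = h (0, 0)) (e : Constraint n) :
    partialSum e (ofCornerSums h) = h e.upper - h e.lower := by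
  obtain ⟨i, j⟩ | ⟨i, j⟩ := e <;>
  · simp only [partialSum_apply, Constraint.upper, Constraint.lower]
    rw [cornerSum_ofCornerSums _ (by omega) (by omega),
      cornerSum_ofCornerSums _ (by omega) (by omega)]
    simp only [hfst, hsnd]
    ring

open scoped Pointwise in
/-- Each entry is a difference of two consecutive row partial sums (the second of which may be
the empty sum). -/
lemma entry_mem_sub {S : Set ℝ} (h0 : (0 : ℝ) ∈ S) {x : Mat} (hS : ∀ e, partialSum e x ∈ S)
    (i j : Fin n) : x i j ∈ S - S := by
  refine ⟨partialSum (.inl (i, j)) x, hS _, cornerSum ((i : ℕ) + 1, j) x - cornerSum (i, j) x,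
    ?_, ?_⟩
  · obtain ⟨j, hj⟩ := j
    cases j with
    | zero => simpa [cornerSum_zero_snd] using h0
    | succ j => exact hS (.inl (i, ⟨j, by omega⟩))
  · rw [partialSum_apply, Constraint.upper, Constraint.lower]
    simp only
    rw [cornerSum_succ_fst_sub, cornerSum_succ_fst_sub, Finset.sum_filter, Finset.sum_filter,
      ← Finset.sum_sub_distrib, Finset.sum_eq_single j]
    · simp
    · intro j' _ hj'
      have : (j' : ℕ) ≠ j := fun h => hj' (Fin.ext h)
      split_ifs <;> first | (exfalso; omega) | ring
    · simp

def partialSumPolytope (n : ℕ) : Set (Matrix (Fin n) (Fin n) ℝ) :=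
  {x | (∀ e : Constraint n, partialSum e x ∈ Set.Icc (0 : ℝ) 1) ∧
    (∀ i, ∑ j, x i j = 1) ∧ (∀ j, ∑ i, x i j = 1)}

noncomputable def tightSet (x : Mat) : Finset (Constraint n) :=
  Finset.univ.filter fun e => partialSum e x ∈ ({0, 1} : Set ℝ)

lemma mem_tightSet {x : Mat} {e : Constraint n} :
    e ∈ tightSet x ↔ partialSum e x = 0 ∨ partialSum e x = 1 := by
  simp [tightSet]

lemma convex_partialSumPolytope : Convex ℝ (partialSumPolytope n) := by
  intro x hx y hy a b ha hb hab
  refine ⟨fun e => ?_, fun i => ?_, fun j => ?_⟩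
  · simpa only [map_add, map_smul] using convex_Icc (0 : ℝ) 1 (hx.1 e) (hy.1 e) ha hb hab
  · simp [Finset.sum_add_distrib, ← Finset.mul_sum, hx.2.1 i, hy.2.1 i, hab]
  · simp [Finset.sum_add_distrib, ← Finset.mul_sum, hx.2.2 j, hy.2.2 j, hab]

lemma IsASM.partialSum_eq_zero_or_eq_one {A : Mat} (hA : IsASM A) (e : Constraint n) :
    partialSum e A = 0 ∨ partialSum e A = 1 := by
  obtain ⟨i, j⟩ | ⟨i, j⟩ := e
  · rw [partialSum_inl]; exact hA.2.1 i j
  · rw [partialSum_inr]; exact hA.2.2.1 i j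

lemma IsASM.mem_partialSumPolytope {A : Mat} (hA : IsASM A) : A ∈ partialSumPolytope n := by
  refine ⟨fun e => ?_, hA.2.2.2.1, hA.2.2.2.2⟩
  rcases hA.partialSum_eq_zero_or_eq_one e with h | h <;> simp [h]

open scoped Pointwise in
lemma isASM_of_tightSet_eq_univ {x : Mat} (hx : x ∈ partialSumPolytope n)
    (htight : tightSet x = Finset.univ) : IsASM x := by
  have h01 : ∀ e, partialSum e x ∈ ({0, 1} : Set ℝ) := fun e =>
    mem_tightSet.1 (htight ▸ Finset.mem_univ e)
  refine ⟨fun i j => ?_, fun i j => ?_, fun i j => ?_, hx.2.1, hx.2.2⟩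
  · obtain ⟨a, ha, b, hb, hab⟩ := entry_mem_sub (by simp) h01 i j
    rw [← hab]
    rcases ha with rfl | rfl <;> rcases hb with rfl | rfl <;> norm_num
  · rw [← partialSum_inl]; exact h01 _
  · rw [← partialSum_inr]; exact h01 _

open scoped Pointwise in
lemma eq_zero_of_forall_partialSum_eq_zero {x : Mat} (h : ∀ e, partialSum e x = 0) : x = 0 := by
  ext i j
  simpa using entry_mem_sub (S := {0}) rfl h i j

lemma sub_mem_zero_one_iff_fract_eq {a b : ℝ} (h : a - b ∈ Set.Icc (0 : ℝ) 1) :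
    a - b ∈ ({0, 1} : Set ℝ) ↔ Int.fract a = Int.fract b := by
  rw [Int.fract_eq_fract, Set.mem_insert_iff, Set.mem_singleton_iff]
  constructor
  · rintro (h | h)
    · exact ⟨0, by simp [h]⟩
    · exact ⟨1, by simp [h]⟩
  · rintro ⟨z, hz⟩
    rw [hz] at h ⊢
    obtain ⟨h0, h1⟩ := h
    have : z = 0 ∨ z = 1 := by
      have h0' : (0 : ℤ) ≤ z := by exact_mod_cast h0
      have h1' : z ≤ 1 := by exact_mod_cast h1
      omega
    rcases this with rfl | rfl <;> simp

lemma mem_tightSet_iff_fract_eq {x : Mat} (hx : x ∈ partialSumPolytope n) (e : Constraint n) :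
    e ∈ tightSet x ↔ Int.fract (cornerSum e.upper x) = Int.fract (cornerSum e.lower x) := by
  rw [tightSet, Finset.mem_filter, ← sub_mem_zero_one_iff_fract_eq (hx.1 e)]
  simp [partialSum_apply]

/-- Shifting all corner sums that share one fractional part `θ` keeps every tight constraint tight,
since a constraint is tight exactly when its two corner sums have equal fractional parts. -/
lemma exists_ne_zero_forall_tightSet {x : Mat} (hx : x ∈ partialSumPolytope n) {e₀ : Constraint n}
    (he₀ : e₀ ∉ tightSet x) :
    ∃ δ : Mat, δ ≠ 0 ∧ ∀ e ∈ tightSet x, partialSum e δ = 0 := by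
  set θ := Int.fract (cornerSum e₀.upper x)
  set g : ℕ × ℕ → ℝ := fun p => if Int.fract (cornerSum p x) = θ then 1 else 0
  have hfst : ∀ a, g (a, 0) = g (0, 0) := fun a => by simp [g, cornerSum_zero_snd]
  have hsnd : ∀ b, g (0, b) = g (0, 0) := fun b => by simp [g, cornerSum_zero_fst]
  refine ⟨ofCornerSums g, fun h0 => ?_, fun e he => ?_⟩
  · have h := partialSum_ofCornerSums g hfst hsnd e₀
    have hne := (mem_tightSet_iff_fract_eq hx e₀).not.1 he₀
    simp only [h0, map_zero, g, θ, if_neg (Ne.symm hne)] at h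
    norm_num at h
  · rw [partialSum_ofCornerSums g hfst hsnd]
    simp only [g, (mem_tightSet_iff_fract_eq hx e).1 he, sub_self]

/-- The first time `t ≥ 0` at which `v + t * d` leaves `[0, 1]` (for `d ≠ 0`). -/
noncomputable def exitTime (v d : ℝ) : ℝ := if 0 < d then (1 - v) / d else v / -d

lemma exitTime_pos {v : ℝ} (hv : v ∈ Set.Ioo (0 : ℝ) 1) {d : ℝ} (hd : d ≠ 0) :
    0 < exitTime v d := by
  obtain ⟨h0, h1⟩ := hv
  unfold exitTime
  split_ifs with h
  · exact div_pos (by linarith) h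
  · exact div_pos h0 (by push Not at h; exact neg_pos.2 (lt_of_le_of_ne h hd))

lemma add_mul_mem_Icc {v : ℝ} (hv : v ∈ Set.Icc (0 : ℝ) 1) {d t : ℝ} (hd : d ≠ 0) (ht₀ : 0 ≤ t)
    (ht : t ≤ exitTime v d) : v + t * d ∈ Set.Icc (0 : ℝ) 1 := by
  obtain ⟨h0, h1⟩ := hv
  unfold exitTime at ht
  split_ifs at ht with h
  · rw [le_div_iff₀ h] at ht
    constructor <;> nlinarith
  · have h' : 0 < -d := neg_pos.2 (lt_of_le_of_ne (not_lt.1 h) hd)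
    rw [le_div_iff₀ h'] at ht
    constructor <;> nlinarith

lemma add_exitTime_mul_mem (v : ℝ) {d : ℝ} (hd : d ≠ 0) :
    v + exitTime v d * d ∈ ({0, 1} : Set ℝ) := by
  simp only [exitTime, Set.mem_insert_iff, Set.mem_singleton_iff]
  split_ifs
  · right; field_simp; ring
  · left; field_simp; ring

lemma sum_eq_zero_of_forall_tightSet {y δ : Mat} (hy : y ∈ partialSumPolytope n)
    (hδ : ∀ e ∈ tightSet y, partialSum e δ = 0) :
    (∀ i, ∑ j, δ i j = 0) ∧ ∀ j, ∑ i, δ i j = 0 := by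
  constructor
  · intro i
    have hi := i.isLt
    have h := partialSum_inl_of_succ_eq i (j := ⟨n - 1, by omega⟩) (by simp only; omega)
    rw [← h δ]
    exact hδ _ (mem_tightSet.2 (Or.inr ((h y).trans (hy.2.1 i))))
  · intro j
    have hj := j.isLt
    have h := partialSum_inr_of_succ_eq (i := ⟨n - 1, by omega⟩) (by simp only; omega) j
    rw [← h δ]
    exact hδ _ (mem_tightSet.2 (Or.inr ((h y).trans (hy.2.2 j))))

lemma exists_pos_add_smul_mem {y δ : Mat} (hy : y ∈ partialSumPolytope n) (hδ₀ : δ ≠ 0)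
    (hδ : ∀ e ∈ tightSet y, partialSum e δ = 0) :
    ∃ ε : ℝ, 0 < ε ∧ y + ε • δ ∈ partialSumPolytope n ∧ tightSet y ⊂ tightSet (y + ε • δ) := by
  set D := Finset.univ.filter fun e => partialSum e δ ≠ 0
  have hD : D.Nonempty := by
    by_contra h
    simp only [Finset.not_nonempty_iff_eq_empty, Finset.filter_eq_empty_iff, Finset.mem_univ,
      not_not, true_implies, D] at h
    exact hδ₀ (eq_zero_of_forall_partialSum_eq_zero h)
  have hmemD {e} : e ∈ D ↔ partialSum e δ ≠ 0 := by simp [D]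
  have hfrac : ∀ e ∈ D, partialSum e y ∈ Set.Ioo (0 : ℝ) 1 := by
    intro e he
    have hnt : e ∉ tightSet y := fun h => hmemD.1 he (hδ e h)
    rw [mem_tightSet] at hnt
    push Not at hnt
    exact ⟨lt_of_le_of_ne (hy.1 e).1 (Ne.symm hnt.1), lt_of_le_of_ne (hy.1 e).2 hnt.2⟩
  set ε := D.inf' hD fun e => exitTime (partialSum e y) (partialSum e δ)
  have hε : 0 < ε := (Finset.lt_inf'_iff hD).2 fun e he => exitTime_pos (hfrac e he) (hmemD.1 he)
  have hval (e) : partialSum e (y + ε • δ) = partialSum e y + ε * partialSum e δ := by simp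
  have hsub : tightSet y ⊆ tightSet (y + ε • δ) := fun e he => by
    rw [mem_tightSet, hval, hδ e he, mul_zero, add_zero]
    exact mem_tightSet.1 he
  obtain ⟨hrow, hcol⟩ := sum_eq_zero_of_forall_tightSet hy hδ
  refine ⟨ε, hε, ⟨fun e => ?_, fun i => ?_, fun j => ?_⟩, ?_⟩
  · rw [hval]
    by_cases he : partialSum e δ = 0
    · simpa [he] using hy.1 e
    · exact add_mul_mem_Icc (hy.1 e) he hε.le (D.inf'_le _ (hmemD.2 he))
  · simp [Finset.sum_add_distrib, ← Finset.mul_sum, hy.2.1 i, hrow i]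
  · simp [Finset.sum_add_distrib, ← Finset.mul_sum, hy.2.2 j, hcol j]
  · obtain ⟨e₁, he₁, hε₁⟩ :=
      D.exists_mem_eq_inf' hD fun e => exitTime (partialSum e y) (partialSum e δ)
    refine Finset.ssubset_iff_of_subset hsub |>.2 ⟨e₁, ?_, ?_⟩
    · rw [tightSet, Finset.mem_filter, hval, show ε = _ from hε₁]
      exact ⟨Finset.mem_univ _, add_exitTime_mul_mem _ (hmemD.1 he₁)⟩
    · exact fun h => hmemD.1 he₁ (hδ e₁ h)

lemma mem_openSegment_add_smul {E : Type*} [AddCommGroup E] [Module ℝ E] (y v : E) {a b : ℝ}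
    (ha : 0 < a) (hb : 0 < b) : y ∈ openSegment ℝ (y + a • v) (y + b • -v) := by
  refine ⟨b / (a + b), a / (a + b), by positivity, by positivity, by field_simp; ring, ?_⟩
  match_scalars <;> field_simp <;> ring

lemma partialSumPolytope_subset_ASMPolytope : partialSumPolytope n ⊆ ASMPolytope n := by
  intro y hy
  induction hk : (tightSet y)ᶜ.card using Nat.strong_induction_on generalizing y with
  | _ k ih =>
    by_cases htight : tightSet y = Finset.univ
    · exact subset_convexHull ℝ _ (isASM_of_tightSet_eq_univ hy htight)
    obtain ⟨e₀, he₀⟩ := not_forall.1 (mt Finset.eq_univ_iff_forall.2 htight)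
    obtain ⟨δ, hδ₀, hδ⟩ := exists_ne_zero_forall_tightSet hy he₀
    obtain ⟨ε₁, hε₁, hz₁, hlt₁⟩ := exists_pos_add_smul_mem hy hδ₀ hδ
    obtain ⟨ε₂, hε₂, hz₂, hlt₂⟩ := exists_pos_add_smul_mem hy (neg_ne_zero.2 hδ₀)
      fun e he => by rw [map_neg, hδ e he, neg_zero]
    have hcard {z : Mat} (h : tightSet y ⊂ tightSet z) : (tightSet z)ᶜ.card < k :=
      hk ▸ Finset.card_lt_card (Finset.compl_ssubset_compl.2 h)
    exact (convex_convexHull ℝ _).openSegment_subset (ih _ (hcard hlt₁) hz₁ rfl)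
      (ih _ (hcard hlt₂) hz₂ rfl) (mem_openSegment_add_smul y δ hε₁ hε₂)

lemma ASMPolytope_eq_partialSumPolytope : ASMPolytope n = partialSumPolytope n :=
  (convexHull_min (fun _ hA => IsASM.mem_partialSumPolytope hA) convex_partialSumPolytope).antisymm
    partialSumPolytope_subset_ASMPolytope

lemma eq_of_midpoint_mem {a b : ℝ} (ha : a ∈ Set.Icc (0 : ℝ) 1) (hb : b ∈ Set.Icc (0 : ℝ) 1)
    (h : 2⁻¹ * a + 2⁻¹ * b ∈ ({0, 1} : Set ℝ)) : a = b := by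
  obtain ⟨ha₀, ha₁⟩ := ha
  obtain ⟨hb₀, hb₁⟩ := hb
  simp only [Set.mem_insert_iff, Set.mem_singleton_iff] at h
  rcases h with h | h <;> linarith

/-- Take `m` with the fewest tight constraints: a constraint tight at `m` stays tight at the
midpoint of `m` and any `g ∈ G`, which forces equal values at `m` and `g`. -/
lemma exists_mem_forall_tightSet_eq {G : Set Mat} (hGQ : G ⊆ partialSumPolytope n)
    (hG : Convex ℝ G) (hne : G.Nonempty) :
    ∃ m ∈ G, ∀ e ∈ tightSet m, ∀ g ∈ G, partialSum e g = partialSum e m := by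
  obtain ⟨m, hm, hmin⟩ := (measure fun x : Mat => (tightSet x).card).wf.has_min G hne
  refine ⟨m, hm, fun e he g hg => ?_⟩
  have hz := hG hm hg (by norm_num : (0 : ℝ) ≤ 2⁻¹) (by norm_num : (0 : ℝ) ≤ 2⁻¹) (by norm_num)
  have hval (e) : partialSum e ((2⁻¹ : ℝ) • m + (2⁻¹ : ℝ) • g) =
      2⁻¹ * partialSum e m + 2⁻¹ * partialSum e g := by simp
  have hsub : tightSet ((2⁻¹ : ℝ) • m + (2⁻¹ : ℝ) • g) ⊆ tightSet m := fun e' he' => by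
    rw [tightSet, Finset.mem_filter, hval] at he'
    rw [tightSet, Finset.mem_filter]
    rwa [← eq_of_midpoint_mem ((hGQ hm).1 e') ((hGQ hg).1 e') he'.2, ← add_mul,
      show (2⁻¹ + 2⁻¹ : ℝ) = 1 by norm_num, one_mul] at he'
  have heq := Finset.eq_of_subset_of_card_le hsub (not_lt.1 (hmin _ hz))
  rw [← heq, tightSet, Finset.mem_filter, hval] at he
  exact (eq_of_midpoint_mem ((hGQ hm).1 e) ((hGQ hg).1 e) he.2).symm

lemma exists_add_smul_sub_mem_of_isExtreme {G : Set Mat}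
    (hG : IsExtreme ℝ (partialSumPolytope n) G) {m A : Mat} (hm : m ∈ G)
    (h : ∀ e ∈ tightSet m, partialSum e A = partialSum e m) :
    ∃ ε : ℝ, 0 < ε ∧ m + ε • (A - m) ∈ G := by
  by_cases hAm : A - m = 0
  · exact ⟨1, one_pos, by simpa [hAm] using hm⟩
  have hδ : ∀ e ∈ tightSet m, partialSum e (A - m) = 0 := fun e he => by
    rw [map_sub, h e he, sub_self]
  obtain ⟨ε₁, hε₁, hz₁, -⟩ := exists_pos_add_smul_mem (hG.1 hm) hAm hδ
  obtain ⟨ε₂, hε₂, hz₂, -⟩ := exists_pos_add_smul_mem (hG.1 hm) (neg_ne_zero.2 hAm)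
    fun e he => by rw [map_neg, hδ e he, neg_zero]
  exact ⟨ε₁, hε₁, (hG.2 hz₁ hz₂ hm (mem_openSegment_add_smul m _ hε₁ hε₂))⟩

lemma exists_mem_tightSet_ne {G : Set Mat} (hG : IsExtreme ℝ (partialSumPolytope n) G)
    {m A : Mat} (hm : m ∈ G) {ℓ : Mat →ₗ[ℝ] ℝ} {c : ℝ} (hℓ : ∀ g ∈ G, ℓ g = c) (hA : ℓ A ≠ c) :
    ∃ e ∈ tightSet m, partialSum e A ≠ partialSum e m := by
  by_contra! h
  obtain ⟨ε, hε, hmem⟩ := exists_add_smul_sub_mem_of_isExtreme hG hm h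
  have := hℓ _ hmem
  rw [map_add, map_smul, map_sub, hℓ m hm, smul_eq_mul] at this
  exact hA (sub_eq_zero.1 ((mul_eq_zero.1 (by linarith : ε * (ℓ A - c) = 0)).resolve_left hε.ne'))

lemma vectorSpan_le_ker_of_forall_eq {k V M : Type*} [Ring k] [AddCommGroup V] [Module k V]
    [AddCommGroup M] [Module k M] {s : Set V} {f : V →ₗ[k] M} {c : M} (h : ∀ x ∈ s, f x = c) :
    vectorSpan k s ≤ LinearMap.ker f := by
  rw [vectorSpan_def, Submodule.span_le]
  rintro _ ⟨x, hx, y, hy, rfl⟩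
  simp [h x hx, h y hy]

lemma inf_ker_eq_of_finrank_add_one {K V : Type*} [Field K] [AddCommGroup V] [Module K V]
    [FiniteDimensional K V] {W₀ W : Submodule K V} {φ : V →ₗ[K] K}
    (hW₀ : W₀ ≤ W ⊓ LinearMap.ker φ) (hrank : Module.finrank K W₀ + 1 = Module.finrank K W)
    {w : V} (hw : w ∈ W) (hφw : φ w ≠ 0) : W ⊓ LinearMap.ker φ = W₀ := by
  have hlt : W ⊓ LinearMap.ker φ < W := inf_lt_left.2 fun hle => hφw (hle hw)
  have := Submodule.finrank_lt_finrank_of_lt hlt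
  exact (Submodule.eq_of_le_of_finrank_le hW₀ (by omega)).symm

lemma eq_of_ne_of_eq_zero_or_eq_one {a b z : ℝ} (ha : a = 0 ∨ a = 1) (hb : b = 0 ∨ b = 1)
    (hz : z = 0 ∨ z = 1) (haz : a ≠ z) (hbz : b ≠ z) : a = b := by
  rcases ha with rfl | rfl <;> rcases hb with rfl | rfl <;> rcases hz with rfl | rfl <;> simp_all


lemma apply_eq_of_apply_eq_of_finrank_add_one {K V : Type*} [Field K] [AddCommGroup V]
    [Module K V] [FiniteDimensional K V] {G F : Set V} (hGF : G ⊆ F)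
    (hrank : Module.finrank K (vectorSpan K G) + 1 = Module.finrank K (vectorSpan K F))
    {ℓ φ : V →ₗ[K] K} {c b : K} (hℓ : ∀ g ∈ G, ℓ g = c) (hφ : ∀ g ∈ G, φ g = b) {a m : V}
    (ha : a ∈ F) (hm : m ∈ F) (ham : φ a ≠ φ m) {u w : V} (hu : u ∈ F) (hw : w ∈ F)
    (huw : φ u = φ w) : ℓ u = ℓ w := by
  have hker : vectorSpan K F ⊓ LinearMap.ker φ = vectorSpan K G :=
    inf_ker_eq_of_finrank_add_one
      (le_inf (vectorSpan_mono K hGF) (vectorSpan_le_ker_of_forall_eq hφ)) hrank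
      (vsub_mem_vectorSpan K ha hm) (by rwa [vsub_eq_sub, map_sub, sub_ne_zero])
  have : u - w ∈ vectorSpan K G := hker ▸ ⟨vsub_mem_vectorSpan K hu hw, by simp [huw]⟩
  simpa [sub_eq_zero] using vectorSpan_le_ker_of_forall_eq hℓ this

theorem faces_are_two_level_general (n : ℕ) (F : Set (Matrix (Fin n) (Fin n) ℝ))
    (hF : IsFaceOf F (ASMPolytope n))
    (ℓ : Matrix (Fin n) (Fin n) ℝ →ₗ[ℝ] ℝ) (c : ℝ)
    (hfacet : IsFacetOf (F ∩ {x | ℓ x = c}) F) :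
    ∃ c' : ℝ, ∀ v ∈ Set.extremePoints ℝ F, ℓ v ≠ c → ℓ v = c' := by
  set G := F ∩ {x | ℓ x = c}
  by_cases hoff : ∃ A ∈ Set.extremePoints ℝ F, ℓ A ≠ c
  swap
  · push Not at hoff
    exact ⟨c, fun v hv hvc => (hvc (hoff v hv)).elim⟩
  obtain ⟨A, hA, hAc⟩ := hoff
  have hGQ : IsExtreme ℝ (partialSumPolytope n) G :=
    ASMPolytope_eq_partialSumPolytope ▸ hF.1.trans hfacet.1.1
  have hvert {v : Matrix (Fin n) (Fin n) ℝ} (hv : v ∈ Set.extremePoints ℝ F) : IsASM v :=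
    extremePoints_convexHull_subset (A := {A | IsASM A})
      (hF.1.extremePoints_subset_extremePoints hv)
  obtain ⟨m, hmG, hm⟩ := exists_mem_forall_tightSet_eq hGQ.1 hfacet.1.2 hfacet.2.1
  obtain ⟨e, he, hAe⟩ := exists_mem_tightSet_ne hGQ hmG (fun g hg => hg.2) hAc
  have hℓ {u w} (hu : u ∈ F) (hw : w ∈ F) (h : partialSum e u = partialSum e w) : ℓ u = ℓ w :=
    apply_eq_of_apply_eq_of_finrank_add_one Set.inter_subset_left hfacet.2.2 (fun g hg => hg.2)
      (hm e he) hA.1 hmG.1 hAe hu hw h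
  refine ⟨ℓ A, fun v hv hvc => hℓ hv.1 hA.1 (eq_of_ne_of_eq_zero_or_eq_one
    ((hvert hv).partialSum_eq_zero_or_eq_one e) ((hvert hA).partialSum_eq_zero_or_eq_one e)
    (mem_tightSet.1 he) (fun h => hvc ((hℓ hv.1 hmG.1 h).trans hmG.2)) hAe)⟩

/-- every face of `ASM_n` is a 2-level polytope: for each
facet-defining hyperplane `{ℓ = c}` of a face `F`, there is a parallel hyperplane
`{ℓ = c'}` containing all vertices of `F` not on the facet. -/
theorem faces_are_two_level (n : ℕ) (F : Set (Matrix (Fin n) (Fin n) ℝ))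
    (hF : IsFaceOf F (ASMPolytope n))
    (ℓ : Matrix (Fin n) (Fin n) ℝ →ₗ[ℝ] ℝ) (c : ℝ)
    (hle : ∀ x ∈ F, ℓ x ≤ c)
    (hfacet : IsFacetOf (F ∩ {x | ℓ x = c}) F) :
    ∃ c' : ℝ, ∀ v ∈ Set.extremePoints ℝ F, ℓ v ≠ c → ℓ v = c' :=
  faces_are_two_level_general n F hF ℓ c hfacet

end ASMPaper
end

section
/- A d-dimensional face of ASM_n has at most 2^d vertices. -/
/-!
The partial row sums `W_{ij} = ∑_{j' ≤ j} a_{ij'}` form an injective linear map, and they send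
every alternating sign matrix to a `0/1`-vector. The vertices of a face `F` of `ASM_n` are ASMs,
so they become `0/1`-vectors spanning an affine flat of dimension at most `dim F`. Such a flat of
dimension `d` contains at most `2^d` points of the cube: splitting along a coordinate on which two
of them differ leaves two sets, each in a flat of dimension `< d`.
-/

open scoped BigOperators
open scoped Classical

namespace ASMPaper

variable {n : ℕ}

open Module

section VectorSpan

variable {k V W : Type*} [DivisionRing k] [AddCommGroup V] [Module k V] [AddCommGroup W]
  [Module k W] [FiniteDimensional k V]

theorem finrank_vectorSpan_lt_of_forall_apply_eq {S T : Set V} (hTS : T ⊆ S) (φ : V →ₗ[k] k)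
    {c : k} (hT : ∀ a ∈ T, φ a = c) {x y : V} (hx : x ∈ S) (hy : y ∈ S) (hxy : φ x ≠ φ y) :
    finrank k (vectorSpan k T) < finrank k (vectorSpan k S) := by
  have hT_ker : vectorSpan k T ≤ LinearMap.ker φ := by
    rw [vectorSpan_def, Submodule.span_le]
    rintro _ ⟨a, ha, b, hb, rfl⟩
    simp [hT a ha, hT b hb]
  have hxy_notMem : x -ᵥ y ∉ vectorSpan k T := fun hmem =>
    hxy (sub_eq_zero.1 (by simpa using hT_ker hmem))
  exact Submodule.finrank_lt_finrank_of_lt <| SetLike.lt_iff_le_and_exists.2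
    ⟨vectorSpan_mono k hTS, x -ᵥ y, vsub_mem_vectorSpan k hx hy, hxy_notMem⟩

theorem finrank_vectorSpan_image_le (L : V →ₗ[k] W) (S : Set V) :
    finrank k (vectorSpan k (L '' S)) ≤ finrank k (vectorSpan k S) := by
  rw [← LinearMap.coe_toAffineMap, ← AffineMap.map_vectorSpan]
  exact Submodule.finrank_map_le _ _

end VectorSpan

theorem ncard_le_two_pow_of_finrank_vectorSpan_le {k ι : Type*} [DivisionRing k] [Fintype ι] (d : ℕ)
    (S : Set (ι → k)) (hS : ∀ f ∈ S, ∀ i, f i = 0 ∨ f i = 1)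
    (hd : finrank k (vectorSpan k S) ≤ d) : S.ncard ≤ 2 ^ d := by
  induction d generalizing S with
  | zero =>
    rw [Nat.le_zero, Submodule.finrank_eq_zero, vectorSpan_eq_bot_iff_subsingleton] at hd
    exact (Set.ncard_le_one hd.finite).2 hd
  | succ d ih =>
    by_cases hsub : S.Subsingleton
    · exact ((Set.ncard_le_one hsub.finite).2 hsub).trans Nat.one_le_two_pow
    obtain ⟨x, hx, y, hy, hxy⟩ := Set.not_subsingleton_iff.1 hsub
    obtain ⟨i, hi⟩ := Function.ne_iff.1 hxy
    let half (c : k) : Set (ι → k) := {z ∈ S | z i = c}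
    have hsplit : S = half (x i) ∪ half (1 - x i) := by
      ext z
      constructor
      · intro hz
        rcases hS z hz i with h | h <;> rcases hS x hx i with h' | h' <;> simp [half, hz, h, h']
      · rintro (⟨hz, -⟩ | ⟨hz, -⟩) <;> exact hz
    have hhalf (c : k) : (half c).ncard ≤ 2 ^ d := by
      have hlt := finrank_vectorSpan_lt_of_forall_apply_eq
        (show half c ⊆ S from Set.sep_subset _ _) (LinearMap.proj (R := k) (φ := fun _ : ι => k) i)
        (fun _ ha => ha.2) hx hy hi
      exact ih _ (fun f hf => hS f hf.1) (by omega)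
    calc S.ncard ≤ (half (x i)).ncard + (half (1 - x i)).ncard := hsplit ▸ Set.ncard_union_le _ _
      _ ≤ 2 ^ (d + 1) := by rw [pow_succ, mul_two]; exact add_le_add (hhalf _) (hhalf _)

theorem rowPartial_eq_add_sum_Iio (A : Matrix (Fin n) (Fin n) ℝ) (i j : Fin n) :
    rowPartial A i j = A i j + ∑ j' ∈ Finset.Iio j, A i j' := by
  rw [rowPartial, Finset.filter_ge_eq_Iic, Finset.Iic_eq_cons_Iio, Finset.sum_cons]

theorem rowPartial_injective :
    Function.Injective (rowPartial : Matrix (Fin n) (Fin n) ℝ → Fin n → Fin n → ℝ) := by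
  intro A B hAB
  ext i j
  induction j using WellFoundedLT.induction with
  | _ j ih =>
    have h := congrFun (congrFun hAB i) j
    rw [rowPartial_eq_add_sum_Iio, rowPartial_eq_add_sum_Iio,
      Finset.sum_congr rfl fun j' hj' => ih j' (Finset.mem_Iio.1 hj')] at h
    exact add_right_cancel h

noncomputable def rowPartialLinearMap (n : ℕ) :
    Matrix (Fin n) (Fin n) ℝ →ₗ[ℝ] (Fin n × Fin n → ℝ) where
  toFun A p := rowPartial A p.1 p.2
  map_add' _ _ := funext fun _ => Finset.sum_add_distrib
  map_smul' _ _ := funext fun _ => (Finset.mul_sum ..).symm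

theorem rowPartialLinearMap_injective : Function.Injective (rowPartialLinearMap n) :=
  fun _ _ hAB => rowPartial_injective <| funext₂ fun i j => congrFun hAB (i, j)

theorem IsASM.rowPartialLinearMap_apply_eq_zero_or_one {A : Matrix (Fin n) (Fin n) ℝ}
    (hA : IsASM A) (p : Fin n × Fin n) :
    rowPartialLinearMap n A p = 0 ∨ rowPartialLinearMap n A p = 1 :=
  hA.2.1 p.1 p.2

theorem IsFaceOf.isASM_of_mem_extremePoints {F : Set (Matrix (Fin n) (Fin n) ℝ)}
    (hF : IsFaceOf F (ASMPolytope n)) {A : Matrix (Fin n) (Fin n) ℝ}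
    (hA : A ∈ Set.extremePoints ℝ F) : IsASM A :=
  (extremePoints_convexHull_subset (hF.1.extremePoints_subset_extremePoints hA) :
    A ∈ {A | IsASM A})

/-- a `d`-dimensional face of `ASM_n` has at most `2^d` vertices. -/
theorem vertex_bound (n : ℕ) (F : Set (Matrix (Fin n) (Fin n) ℝ))
    (hF : IsFaceOf F (ASMPolytope n)) (d : ℕ)
    (hd : Module.finrank ℝ (vectorSpan ℝ F) = d) :
    (Set.extremePoints ℝ F).ncard ≤ 2 ^ d := by
  rw [← Set.ncard_image_of_injective _ rowPartialLinearMap_injective]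
  refine ncard_le_two_pow_of_finrank_vectorSpan_le d _ ?_ ?_
  · rintro _ ⟨A, hA, rfl⟩
    exact (hF.isASM_of_mem_extremePoints hA).rowPartialLinearMap_apply_eq_zero_or_one
  · calc finrank ℝ (vectorSpan ℝ (rowPartialLinearMap n '' Set.extremePoints ℝ F))
        ≤ finrank ℝ (vectorSpan ℝ (Set.extremePoints ℝ F)) := finrank_vectorSpan_image_le _ _
      _ ≤ finrank ℝ (vectorSpan ℝ F) :=
        Submodule.finrank_mono (vectorSpan_mono ℝ extremePoints_subset)
      _ = d := hd
end ASMPaper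
end
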